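/- arXiv:1903.01191 — 6 statements merged into one kernel-verified Lean document; each statement's English description precedes it below -/
import Mathlib

section
/- A lattice L is distributive if and only if there exists a Banach lattice X and an injective lattice homomorphism from L into X (equivalently, L is lattice-isomorphic to a sublattice of a Banach lattice). -/
/-!
A Banach lattice is in particular a lattice-ordered group, and those are distributive;
distributivity passes to sublattices. Conversely, by the prime ideal theorem the elements of a
distributive lattice are separated by prime ideals, so `a ↦ 𝟙{J prime | a ∉ J}` embeds it into
the Banach lattice of bounded real functions on the (discrete) set of its prime ideals.
-/

open Order
open scoped BoundedContinuousFunction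

namespace DistribLattice

variable {α : Type*} [DistribLattice α]

theorem exists_isPrime_mem_notMem {a b : α} (h : ¬a ≤ b) :
    ∃ J : Ideal α, J.IsPrime ∧ b ∈ J ∧ a ∉ J := by
  have hdisj : Disjoint (PFilter.principal a : Set α) (Ideal.principal b : Set α) :=
    Set.disjoint_left.mpr fun x hax hxb =>
      h ((PFilter.mem_principal.mp hax).trans (Ideal.mem_principal.mp hxb))
  obtain ⟨J, hJ, hbJ, haJ⟩ := prime_ideal_of_disjoint_filter_ideal hdisj
  exact ⟨J, hJ, hbJ Ideal.mem_principal_self,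
    Set.disjoint_left.mp haJ (PFilter.mem_principal.mpr le_rfl)⟩

variable (α) in
def primeIdealsNotMem : LatticeHom α (Set {J : Ideal α // J.IsPrime}) where
  toFun a := {J | a ∉ J.1}
  map_sup' a b := by
    ext J
    simp only [Set.mem_ofPred_eq, Set.sup_eq_union, Set.mem_union, Ideal.sup_mem_iff, not_and_or]
  map_inf' a b := by
    ext J
    simp only [Set.mem_ofPred_eq, Set.inf_eq_inter, Set.mem_inter_iff, ← not_or]
    exact not_congr ⟨J.2.mem_or_mem,
      fun h => h.elim (J.1.lower inf_le_left) (J.1.lower inf_le_right)⟩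

theorem primeIdealsNotMem_injective : Function.Injective (primeIdealsNotMem α) := by
  have hle : ∀ a b : α, primeIdealsNotMem α a = primeIdealsNotMem α b → a ≤ b := by
    intro a b hab
    by_contra h
    obtain ⟨J, hJ, hbJ, haJ⟩ := exists_isPrime_mem_notMem h
    have : (⟨J, hJ⟩ : {J : Ideal α // J.IsPrime}) ∈ primeIdealsNotMem α a := haJ
    exact (hab ▸ this) hbJ
  exact fun a b hab => (hle a b hab).antisymm (hle b a hab.symm)

end DistribLattice

namespace BoundedContinuousFunction

variable (ι : Type*) [TopologicalSpace ι] [DiscreteTopology ι]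

noncomputable def indicatorLatticeHom : LatticeHom (Set ι) (ι →ᵇ ℝ) where
  toFun s := indicator s (isClopen_discrete s)
  map_sup' s t := by
    ext x
    by_cases hs : x ∈ s <;> by_cases ht : x ∈ t <;> simp [hs, ht]
  map_inf' s t := by
    ext x
    by_cases hs : x ∈ s <;> by_cases ht : x ∈ t <;> simp [hs, ht]

theorem indicatorLatticeHom_injective : Function.Injective (indicatorLatticeHom ι) :=
  fun _ _ h => Set.indicator_one_inj ℝ (congrArg DFunLike.coe h)

end BoundedContinuousFunction

/-- A lattice `L` is distributive if and only if there exist a Banach lattice `X`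
and an injective lattice homomorphism from `L` into `X`. -/
theorem stmt_0 {L : Type} [Lattice L] :
    (∀ x y z : L, x ⊓ (y ⊔ z) = (x ⊓ y) ⊔ (x ⊓ z)) ↔
      ∃ (X : Type) (_ : NormedAddCommGroup X) (_ : Lattice X)
        (_ : IsOrderedAddMonoid X) (_ : HasSolidNorm X) (_ : NormedSpace ℝ X)
        (_ : CompleteSpace X) (f : LatticeHom L X), Function.Injective f := by
  constructor
  · intro h
    let : DistribLattice L := DistribLattice.ofInfSupLe fun a b c => (h a b c).le
    let ι := {J : Ideal L // J.IsPrime}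
    let : TopologicalSpace ι := ⊥
    have : DiscreteTopology ι := ⟨rfl⟩
    exact ⟨ι →ᵇ ℝ, inferInstance, inferInstance, inferInstance, inferInstance,
      inferInstance, inferInstance, (BoundedContinuousFunction.indicatorLatticeHom ι).comp
        (DistribLattice.primeIdealsNotMem L),
      (BoundedContinuousFunction.indicatorLatticeHom_injective ι).comp
        DistribLattice.primeIdealsNotMem_injective⟩
  · rintro ⟨X, _, _, _, _, _, _, f, hf⟩
    let : DistribLattice X := AddCommGroup.toDistribLattice X
    exact fun x y z => hf <| by simp only [map_inf, map_sup, inf_sup_left]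
end

section
/- Let L be a finite lattice with underlying set {0,...,n-1}. Then the set L* = {x ∈ [-1,1]^n : x, viewed as a function L → [-1,1], is a lattice homomorphism} is a finite union of closed convex subsets of ℝ^n. -/
/-!
A map `x : L → ℝ` preserves `⊔` and `⊓` on the pair `a, b` exactly when either
`x a ≤ x b`, `x (a ⊔ b) = x b`, `x (a ⊓ b) = x a`, or the same with `a` and `b` swapped. Each
alternative is a system of linear equalities and inequalities, hence cuts out a closed convex
set. Choosing one alternative for every pair writes `L*` as the union, over the finitely many
choices, of the intersections of the chosen closed convex sets with the cube `[-1,1]^L`.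
-/

section FiniteUnion

variable {𝕜 E ι : Type*} [Semiring 𝕜] [PartialOrder 𝕜] [AddCommMonoid E] [SMul 𝕜 E]
  [TopologicalSpace E]

theorem exists_finset_isClosed_convex_inter_iInter_union [Finite ι] {K : Set E}
    (hK : IsClosed K ∧ Convex 𝕜 K) {A B : ι → Set E} (hA : ∀ i, IsClosed (A i) ∧ Convex 𝕜 (A i))
    (hB : ∀ i, IsClosed (B i) ∧ Convex 𝕜 (B i)) :
    ∃ S : Finset (Set E), (∀ C ∈ S, IsClosed C ∧ Convex 𝕜 C) ∧
      K ∩ ⋂ i, (A i ∪ B i) = ⋃ C ∈ S, C := by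
  classical
  have := Fintype.ofFinite ι
  let piece (σ : ι → Bool) : Set E := K ∩ ⋂ i, if σ i then A i else B i
  refine ⟨Finset.univ.image piece, ?_, ?_⟩
  · simp only [Finset.mem_image, Finset.mem_univ, true_and]
    rintro _ ⟨σ, rfl⟩
    have h i : IsClosed (if σ i then A i else B i) ∧ Convex 𝕜 (if σ i then A i else B i) := by
      cases σ i <;> simp [hA i, hB i]
    exact ⟨hK.1.inter (isClosed_iInter fun i ↦ (h i).1),
      hK.2.inter (convex_iInter fun i ↦ (h i).2)⟩
  · ext x
    simp only [Finset.mem_image, Finset.mem_univ, true_and, Set.iUnion_exists,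
      Set.iUnion_iUnion_eq', Set.mem_iUnion]
    constructor
    · rintro ⟨hxK, hx⟩
      refine ⟨fun i ↦ decide (x ∈ A i), hxK, Set.mem_iInter.2 fun i ↦ ?_⟩
      by_cases hxA : x ∈ A i
      · simp [hxA]
      · simpa [hxA] using (Set.mem_iInter.1 hx i).resolve_left hxA
    · rintro ⟨σ, hxK, hx⟩
      refine ⟨hxK, Set.mem_iInter.2 fun i ↦ ?_⟩
      have hxi := Set.mem_iInter.1 hx i
      cases hσ : σ i
      · exact Or.inr (by simpa [hσ] using hxi)
      · exact Or.inl (by simpa [hσ] using hxi)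

end FiniteUnion

section LatticeHom

variable {L : Type*} [Lattice L]

def latticeHomCell (a b : L) : Set (L → ℝ) :=
  {x | x a ≤ x b ∧ x (a ⊔ b) = x b ∧ x (a ⊓ b) = x a}

theorem isClosed_latticeHomCell (a b : L) : IsClosed (latticeHomCell a b) := by
  simp only [latticeHomCell, Set.ofPred_and]
  exact (isClosed_le (continuous_apply a) (continuous_apply b)).inter
    ((isClosed_eq (continuous_apply (a ⊔ b)) (continuous_apply b)).inter
      (isClosed_eq (continuous_apply (a ⊓ b)) (continuous_apply a)))

theorem convex_latticeHomCell (a b : L) : Convex ℝ (latticeHomCell a b) := by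
  rintro x ⟨hx, hx_sup, hx_inf⟩ y ⟨hy, hy_sup, hy_inf⟩ s t hs ht -
  simp only [latticeHomCell, Set.mem_ofPred_eq, Pi.add_apply, Pi.smul_apply, smul_eq_mul,
    hx_sup, hx_inf, hy_sup, hy_inf, and_self, and_true]
  gcongr

theorem sup_inf_eq_max_min_iff (x : L → ℝ) (a b : L) :
    x (a ⊔ b) = max (x a) (x b) ∧ x (a ⊓ b) = min (x a) (x b) ↔
      x ∈ latticeHomCell a b ∪ latticeHomCell b a := by
  simp only [latticeHomCell, Set.mem_union, Set.mem_ofPred_eq, sup_comm b, inf_comm b]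
  constructor
  · rintro ⟨hs, hi⟩
    rcases le_total (x a) (x b) with h | h
    · exact Or.inl ⟨h, by rw [hs, max_eq_right h], by rw [hi, min_eq_left h]⟩
    · exact Or.inr ⟨h, by rw [hs, max_eq_left h], by rw [hi, min_eq_right h]⟩
  · rintro (⟨h, hs, hi⟩ | ⟨h, hs, hi⟩)
    · exact ⟨by rw [hs, max_eq_right h], by rw [hi, min_eq_left h]⟩
    · exact ⟨by rw [hs, max_eq_left h], by rw [hi, min_eq_right h]⟩

end LatticeHom

/-- For a finite lattice `L` (identified with `{0,…,n-1}`), the set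
`L* = {x ∈ [-1,1]^L : x is a lattice homomorphism L → [-1,1]}` is a finite union of
closed convex subsets of `ℝ^L`. -/
theorem stmt_3 {L : Type} [Lattice L] [Fintype L] :
    ∃ S : Finset (Set (L → ℝ)), (∀ C ∈ S, IsClosed C ∧ Convex ℝ C) ∧
      {x : L → ℝ | (∀ a, x a ∈ Set.Icc (-1 : ℝ) 1) ∧
          (∀ a b, x (a ⊔ b) = max (x a) (x b)) ∧ (∀ a b, x (a ⊓ b) = min (x a) (x b))} =
        ⋃ C ∈ S, (C : Set (L → ℝ)) := by
  have hcell (p : L × L) : IsClosed (latticeHomCell p.1 p.2) ∧ Convex ℝ (latticeHomCell p.1 p.2) :=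
    ⟨isClosed_latticeHomCell _ _, convex_latticeHomCell _ _⟩
  have hcube : IsClosed (Set.univ.pi fun _ : L ↦ Set.Icc (-1 : ℝ) 1) ∧
      Convex ℝ (Set.univ.pi fun _ : L ↦ Set.Icc (-1 : ℝ) 1) :=
    ⟨isClosed_set_pi fun _ _ ↦ isClosed_Icc, convex_pi fun _ _ ↦ convex_Icc _ _⟩
  obtain ⟨S, hS, hunion⟩ :=
    exists_finset_isClosed_convex_inter_iInter_union hcube hcell fun p ↦ hcell p.swap
  refine ⟨S, hS, hunion ▸ ?_⟩
  ext x
  simp only [Set.mem_ofPred_eq, Set.mem_inter_iff, Set.mem_univ_pi, Set.mem_iInter, Prod.forall,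
    Prod.fst_swap, Prod.snd_swap, ← sup_inf_eq_max_min_iff, forall_and]
end

section
/- For k ≥ 3, let W_k = {x ∈ [-1,1]^ℕ : x(i) < x(j) + 1/k whenever i < j < k}. Then each W_k is open in the product topology, W_{k+1} ⊆ W_k is not required, but the family {W_k : k ≥ 3} is a neighborhood basis of the set M of nondecreasing sequences: every open set U containing M contains some W_k. -/
/-! Relaxing the strict inequalities of `W_k` gives closed sets `C_k ⊇ W_k` that decrease in `k`
and whose intersection is `M`, since `1/k → 0`. In the compact cube a decreasing family of closed
sets whose intersection lies in an open set `U` already has a member inside `U`. -/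

/-- The cube `[-1,1]^ℕ` with the product topology. -/
abbrev Cube : Type := ℕ → Set.Icc (-1 : ℝ) 1

/-- `W_k = {x ∈ [-1,1]^ℕ : x i < x j + 1/k whenever i < j < k}`. -/
def Wk (k : ℕ) : Set Cube :=
  {x | ∀ i j : ℕ, i < j → j < k → (x i : ℝ) < (x j : ℝ) + 1 / (k : ℝ)}

/-- `M` is the set of nondecreasing sequences in `[-1,1]^ℕ`. -/
def Mset : Set Cube := {x | Monotone fun n => (x n : ℝ)}

open Filter Topology

def closedWk (k : ℕ) : Set Cube :=
  {x | ∀ i j : ℕ, i < j → j < k → (x i : ℝ) ≤ (x j : ℝ) + 1 / (k : ℝ)}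

lemma setOf_forall_lt_lt_eq_biInter {X : Type*} (k : ℕ) (p : ℕ → ℕ → X → Prop) :
    {x | ∀ i j : ℕ, i < j → j < k → p i j x} =
      ⋂ j ∈ Finset.range k, ⋂ i ∈ Finset.range j, {x | p i j x} := by
  ext x
  simp only [Set.mem_ofPred_eq, Set.mem_iInter, Finset.mem_range]
  exact ⟨fun h j hj i hi => h i j hi hj, fun h i j hi hj => h j hj i hi⟩

lemma continuous_cube_coord (i : ℕ) : Continuous fun x : Cube => (x i : ℝ) :=
  continuous_subtype_val.comp (continuous_apply i)

lemma isOpen_Wk (k : ℕ) : IsOpen (Wk k) := by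
  rw [Wk, setOf_forall_lt_lt_eq_biInter]
  exact isOpen_biInter_finset fun j _ => isOpen_biInter_finset fun i _ =>
    isOpen_lt (continuous_cube_coord i) ((continuous_cube_coord j).add continuous_const)

lemma isClosed_closedWk (k : ℕ) : IsClosed (closedWk k) := by
  rw [closedWk, setOf_forall_lt_lt_eq_biInter]
  exact isClosed_biInter fun j _ => isClosed_biInter fun i _ =>
    isClosed_le (continuous_cube_coord i) ((continuous_cube_coord j).add continuous_const)

lemma Wk_subset_closedWk (k : ℕ) : Wk k ⊆ closedWk k :=
  fun _ hx i j hij hjk => (hx i j hij hjk).le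

lemma antitone_closedWk : Antitone closedWk := by
  intro k l hkl x hx i j hij hjk
  have hk : (0 : ℝ) < k := by exact_mod_cast (Nat.zero_le j).trans_lt hjk
  calc (x i : ℝ) ≤ x j + 1 / (l : ℝ) := hx i j hij (hjk.trans_le hkl)
    _ ≤ x j + 1 / (k : ℝ) := by gcongr

lemma Mset_subset_Wk {k : ℕ} (hk : 0 < k) : Mset ⊆ Wk k := by
  intro x hx i j hij _
  have : (0 : ℝ) < 1 / (k : ℝ) := by positivity
  linarith [hx hij.le]

lemma iInter_closedWk_subset_Mset : ⋂ k, closedWk k ⊆ Mset := by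
  intro x hx i j hij
  rcases hij.lt_or_eq with hij | rfl
  · have hlim : Tendsto (fun k : ℕ => (x j : ℝ) + 1 / (k : ℝ)) atTop (𝓝 (x j)) := by
      simpa using tendsto_const_nhds.add (tendsto_one_div_atTop_nhds_zero_nat (𝕜 := ℝ))
    refine ge_of_tendsto hlim (eventually_atTop.2 ⟨j + 1, fun k hk => ?_⟩)
    exact Set.mem_iInter.1 hx k i j hij hk
  · exact le_rfl

lemma exists_closedWk_subset {U : Set Cube} (hU : IsOpen U) (hMU : Mset ⊆ U) :
    ∃ k, closedWk k ⊆ U :=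
  exists_subset_nhds_of_isCompact' antitone_closedWk.directed_ge
    (fun k => (isClosed_closedWk k).isCompact) isClosed_closedWk
    fun _ hx => hU.mem_nhds (hMU (iInter_closedWk_subset_Mset hx))

/-- Each `W_k` (`k ≥ 3`) is open and contains `M`, and the family `{W_k : k ≥ 3}` is a
neighborhood basis of `M`: every open set containing `M` contains some `W_k`. -/
theorem stmt_9 :
    (∀ k : ℕ, 3 ≤ k → IsOpen (Wk k) ∧ Mset ⊆ Wk k) ∧
    ∀ U : Set Cube, IsOpen U → Mset ⊆ U → ∃ k : ℕ, 3 ≤ k ∧ Wk k ⊆ U := by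
  refine ⟨fun k hk => ⟨isOpen_Wk k, Mset_subset_Wk (by omega)⟩, fun U hU hMU => ?_⟩
  obtain ⟨k, hk⟩ := exists_closedWk_subset hU hMU
  refine ⟨max 3 k, le_max_left _ _, ?_⟩
  calc Wk (max 3 k) ⊆ closedWk (max 3 k) := Wk_subset_closedWk _
    _ ⊆ closedWk k := antitone_closedWk (le_max_right _ _)
    _ ⊆ U := hk
end

section
/- Suppose φ_i : [-1,1]^ℕ → ℝ, i = 1, 2, ..., are continuous functions (for the product topology) such that (1) φ_i(x) = x(i) whenever x is a nondecreasing sequence, and (2) φ_i(x) ≤ φ_{i+1}(x) for all x and i. Then the sequence of norms ‖φ_i‖ is unbounded, where ‖φ‖ = sup { Σ_{j=1}^m |r_j φ(x_j)| : m ∈ ℕ, r_j ∈ ℝ, x_j ∈ [-1,1]^ℕ, sup_{n ∈ ℕ} Σ_{j=1}^m |r_j x_j(n)| ≤ 1 }. -/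
/-!
Put `K₀ = 0` and, by continuity of `φ_{K_j}` at the nondecreasing sequence `𝟙_{[K_j, ∞)}`
(where it equals `1`), pick `K_{j+1} > K_j` with `φ_{K_j}(𝟙_{[K_j, K_{j+1})}) > 1/2`.
The blocks `𝟙_{[K_j, K_{j+1})}`, `j < m`, have disjoint supports, so with all `r_j = 1` they form
an admissible family, while monotonicity in `i` gives `φ_{K_m}(𝟙_{[K_j, K_{j+1})}) > 1/2` for each
`j < m`. Hence `‖φ_{K_m}‖ ≥ m / 2`.
-/

open Set Filter Topology

namespace Cube

noncomputable def indicator (s : Set ℕ) : Cube := fun n =>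
  ⟨s.indicator 1 n, by by_cases h : n ∈ s <;> simp [h]⟩

@[simp]
lemma coe_indicator_apply (s : Set ℕ) (n : ℕ) : (indicator s n : ℝ) = s.indicator 1 n := rfl

lemma monotone_indicator_Ici (k : ℕ) : Monotone fun n => (indicator (Ici k) n : ℝ) := by
  intro a b hab
  by_cases ha : k ≤ a
  · simp [ha, ha.trans hab]
  · by_cases hb : k ≤ b <;> simp [ha, hb]

lemma tendsto_indicator_Ico (k : ℕ) :
    Tendsto (fun N => indicator (Ico k N)) atTop (𝓝 (indicator (Ici k))) := by
  refine tendsto_pi_nhds.2 fun n => tendsto_const_nhds.congr' ?_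
  filter_upwards [eventually_gt_atTop n] with N hN
  by_cases hk : k ≤ n <;> simp [indicator, hk, hN]

lemma sum_abs_indicator_le_one {ι : Type*} (t : Finset ι) {s : ι → Set ℕ}
    (hs : (t : Set ι).PairwiseDisjoint s) (n : ℕ) :
    ∑ j ∈ t, |(indicator (s j) n : ℝ)| ≤ 1 := by
  have hnonneg (u : Set ℕ) : 0 ≤ u.indicator (1 : ℕ → ℝ) n :=
    indicator_nonneg (fun _ _ => zero_le_one) n
  calc ∑ j ∈ t, |(indicator (s j) n : ℝ)| = (⋃ j ∈ t, s j).indicator 1 n := by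
        simp only [coe_indicator_apply, abs_of_nonneg (hnonneg _),
          Finset.indicator_biUnion_apply t s hs]
    _ ≤ 1 := indicator_le_self' (fun _ _ => zero_le_one) n

end Cube

lemma exists_lt_apply_indicator_Ico {f : Cube → ℝ} (hf : Continuous f) {k : ℕ} {a : ℝ}
    (ha : a < f (Cube.indicator (Ici k))) : ∃ N, k < N ∧ a < f (Cube.indicator (Ico k N)) :=
  (((hf.tendsto _).comp (Cube.tendsto_indicator_Ico k)).eventually (eventually_gt_nhds ha)
    |>.and (eventually_gt_atTop k)).exists.imp fun _ h => h.symm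

/-- If `φ_i : [-1,1]^ℕ → ℝ` are continuous, agree with the `i`-th coordinate on
nondecreasing sequences, and are pointwise increasing in `i`, then the sequence of
free-Banach-lattice norms `‖φ_i‖` is unbounded: for every `C` there are an index `i`
and an admissible family `(r_j, x_j)` witnessing `‖φ_i‖ > C`. -/
theorem stmt_10 (φ : ℕ → Cube → ℝ) (hcont : ∀ i, Continuous (φ i))
    (hmono : ∀ (i : ℕ) (x : Cube), Monotone (fun n => (x n : ℝ)) → φ i x = (x i : ℝ))
    (hinc : ∀ (i : ℕ) (x : Cube), φ i x ≤ φ (i + 1) x) :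
    ∀ C : ℝ, ∃ (i m : ℕ) (r : Fin m → ℝ) (x : Fin m → Cube),
      (∀ n : ℕ, ∑ j, |r j * (x j n : ℝ)| ≤ 1) ∧ C < ∑ j, |r j * φ i (x j)| := by
  have hblock (k : ℕ) : ∃ N, k < N ∧ 1 / 2 < φ k (Cube.indicator (Ico k N)) :=
    exists_lt_apply_indicator_Ico (hcont k) <| by
      rw [hmono k _ (Cube.monotone_indicator_Ici k)]; norm_num
  choose next hnext_gt hnext using hblock
  set K : ℕ → ℕ := fun j => next^[j] 0
  have hKsucc (j : ℕ) : K (j + 1) = next (K j) := Function.iterate_succ_apply' next j 0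
  have hK : StrictMono K := strictMono_nat_of_lt_succ fun j => hKsucc j ▸ hnext_gt (K j)
  set block : ℕ → Cube := fun j => Cube.indicator (Ico (K j) (K (j + 1)))
  intro C
  obtain ⟨m, hm⟩ := exists_nat_gt (2 * C)
  refine ⟨K m, m, fun _ => 1, fun j => block j, fun n => ?_, ?_⟩
  · have hdisj := hK.monotone.pairwise_disjoint_on_Ico_succ.set_pairwise (Finset.range m : Set ℕ)
    simp only [Order.succ_eq_add_one] at hdisj
    simpa only [one_mul, Fin.sum_univ_eq_sum_range (fun j => |(block j n : ℝ)|)] using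
      Cube.sum_abs_indicator_le_one (Finset.range m) hdisj n
  · have hterm (j : Fin m) : 1 / 2 ≤ |1 * φ (K m) (block j)| := by
      rw [one_mul]
      refine ((hnext (K j)).le.trans ?_).trans (le_abs_self _)
      rw [← hKsucc]
      exact monotone_nat_of_le_succ (hinc · _) (hK.monotone j.isLt.le)
    calc C < ∑ _j : Fin m, (1 / 2 : ℝ) := by
          simp only [Finset.sum_const, Finset.card_univ, Fintype.card_fin, nsmul_eq_mul]
          linarith
      _ ≤ _ := Finset.sum_le_sum fun j _ => hterm j
end

section
/- With the hypotheses of the previous lemma (continuous φ_i on [-1,1]^ℕ agreeing with the i-th coordinate on nondecreasing sequences and pointwise increasing in i), there exist indices k_0 < k_1 < k_2 < ... and points y^1, y^2, ... ∈ [-1,1]^ℕ, where y^{j+1} is the indicator sequence of the interval [k_j, k_{j+1}), such that φ_{k_m}(y^{j+1}) > 1/2 whenever j + 1 ≤ m. -/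
/-- The indicator sequence of the interval `[a, b)`, as an element of `[-1,1]^ℕ`. -/
def indicatorSeq (a b : ℕ) : Cube := fun n =>
  if a ≤ n ∧ n < b then ⟨1, by norm_num⟩ else ⟨0, by norm_num⟩

open Filter Topology

def stepSeq (a : ℕ) : Cube := fun n =>
  if a ≤ n then ⟨1, by norm_num⟩ else ⟨0, by norm_num⟩

lemma monotone_stepSeq (a : ℕ) : Monotone (fun n => (stepSeq a n : ℝ)) := by
  intro n m hnm
  by_cases hn : a ≤ n
  · simp [stepSeq, hn, hn.trans hnm]
  · by_cases hm : a ≤ m <;> simp [stepSeq, hn, hm]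

lemma stepSeq_self (a : ℕ) : (stepSeq a a : ℝ) = 1 := by
  simp [stepSeq]

lemma tendsto_indicatorSeq_atTop (a : ℕ) :
    Tendsto (indicatorSeq a) atTop (𝓝 (stepSeq a)) := by
  refine tendsto_pi_nhds.2 fun n => tendsto_const_nhds.congr' ?_
  filter_upwards [eventually_gt_atTop n] with b hb
  by_cases h : a ≤ n <;> simp [indicatorSeq, stepSeq, h, hb]

lemma exists_gt_lt_apply_indicatorSeq {f : Cube → ℝ} {a : ℕ} (hf : ContinuousAt f (stepSeq a))
    {c : ℝ} (hc : c < f (stepSeq a)) : ∃ b, a < b ∧ c < f (indicatorSeq a b) :=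
  ((eventually_gt_atTop a).and
    ((hf.tendsto.comp (tendsto_indicatorSeq_atTop a)).eventually (eventually_gt_nhds hc))).exists

lemma exists_strictMono_forall_succ {α : Type*} [Preorder α] [Nonempty α] {P : α → α → Prop}
    (h : ∀ a, ∃ b, a < b ∧ P a b) : ∃ k : ℕ → α, StrictMono k ∧ ∀ j, P (k j) (k (j + 1)) := by
  choose next hlt hP using h
  let k : ℕ → α := fun j => Nat.rec (Classical.arbitrary α) (fun _ a => next a) j
  exact ⟨k, strictMono_nat_of_lt_succ fun j => hlt (k j), fun j => hP (k j)⟩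

/-- Under the hypotheses of Lemma 4.1 there are indices `k_0 < k_1 < ⋯` such that,
with `y^{j+1}` the indicator sequence of `[k_j, k_{j+1})`, one has
`φ_{k_m}(y^{j+1}) > 1/2` whenever `j + 1 ≤ m`. -/
theorem stmt_11 (φ : ℕ → Cube → ℝ) (hcont : ∀ i, Continuous (φ i))
    (hmono : ∀ (i : ℕ) (x : Cube), Monotone (fun n => (x n : ℝ)) → φ i x = (x i : ℝ))
    (hinc : ∀ (i : ℕ) (x : Cube), φ i x ≤ φ (i + 1) x) :
    ∃ k : ℕ → ℕ, StrictMono k ∧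
      ∀ j m : ℕ, j + 1 ≤ m → 1 / 2 < φ (k m) (indicatorSeq (k j) (k (j + 1))) := by
  have hstep (a : ℕ) : ∃ b, a < b ∧ 1 / 2 < φ a (indicatorSeq a b) := by
    refine exists_gt_lt_apply_indicatorSeq (hcont a).continuousAt ?_
    rw [hmono a _ (monotone_stepSeq a), stepSeq_self]
    norm_num
  obtain ⟨k, hk, hkφ⟩ := exists_strictMono_forall_succ hstep
  refine ⟨k, hk, fun j m hjm => (hkφ j).trans_le ?_⟩
  exact monotone_nat_of_le_succ (fun i => hinc i _) (hk.monotone (by omega))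
end

section
/- Let P and P' be Banach lattices and let π̃ : P → P' and ι̃ : P' → P be Banach lattice homomorphisms with ‖ι̃‖ = ‖π̃‖ = 1 and π̃ ∘ ι̃ = id_{P'}. If P is projective, then P' is projective. -/
/-- A map between Banach lattices preserves the (finite) lattice operations. Together
with being a continuous linear map, this makes it a Banach lattice homomorphism. -/
def IsLatticeOpPreserving {X Y : Type} [Lattice X] [Lattice Y] (f : X → Y) : Prop :=
  (∀ a b : X, f (a ⊔ b) = f a ⊔ f b) ∧ (∀ a b : X, f (a ⊓ b) = f a ⊓ f b)

/-- `Q : X → Y` is a quotient map of Banach lattices: a surjective map with the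
quotient-norm lifting property (equivalently, `Y` is isometrically lattice-isomorphic
to `X/J` for the closed ideal `J = ker Q`, with `Q` the quotient map). -/
def IsQuotientOperator {X Y : Type} [NormedAddCommGroup X] [Lattice X] [IsOrderedAddMonoid X] [HasSolidNorm X] [NormedSpace ℝ X]
    [NormedAddCommGroup Y] [Lattice Y] [IsOrderedAddMonoid Y] [HasSolidNorm Y] [NormedSpace ℝ Y] (Q : X →L[ℝ] Y) : Prop :=
  Function.Surjective Q ∧ ∀ y : Y, ∀ c : ℝ, ‖y‖ < c → ∃ x : X, Q x = y ∧ ‖x‖ < c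

/-- A Banach lattice `P` is projective if for every Banach lattice quotient map
`Q : X → X/J` and every Banach lattice homomorphism `T : P → X/J` and `ε > 0` there is
a Banach lattice homomorphism `T̂ : P → X` with `Q ∘ T̂ = T` and `‖T̂‖ ≤ (1+ε)‖T‖`. -/
def IsProjectiveBanachLattice (P : Type) [NormedAddCommGroup P] [Lattice P] [IsOrderedAddMonoid P] [HasSolidNorm P]
    [NormedSpace ℝ P] [CompleteSpace P] : Prop :=
  ∀ (X Y : Type) [NormedAddCommGroup X] [Lattice X] [IsOrderedAddMonoid X] [HasSolidNorm X] [NormedSpace ℝ X] [CompleteSpace X]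
    [NormedAddCommGroup Y] [Lattice Y] [IsOrderedAddMonoid Y] [HasSolidNorm Y] [NormedSpace ℝ Y] [CompleteSpace Y],
    ∀ Q : X →L[ℝ] Y, IsLatticeOpPreserving Q → IsQuotientOperator Q →
      ∀ T : P →L[ℝ] Y, IsLatticeOpPreserving T →
        ∀ ε : ℝ, 0 < ε → ∃ T' : P →L[ℝ] X, IsLatticeOpPreserving T' ∧
          (∀ p, Q (T' p) = T p) ∧ ‖T'‖ ≤ (1 + ε) * ‖T‖

theorem IsLatticeOpPreserving.comp {X Y Z : Type} [Lattice X] [Lattice Y] [Lattice Z]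
    {g : Y → Z} {f : X → Y} (hg : IsLatticeOpPreserving g) (hf : IsLatticeOpPreserving f) :
    IsLatticeOpPreserving (g ∘ f) :=
  ⟨fun a b => by simp only [Function.comp_apply, hf.1, hg.1],
    fun a b => by simp only [Function.comp_apply, hf.2, hg.2]⟩

theorem IsProjectiveBanachLattice.of_retract {P P' : Type}
    [NormedAddCommGroup P] [Lattice P] [IsOrderedAddMonoid P] [HasSolidNorm P] [NormedSpace ℝ P]
    [CompleteSpace P]
    [NormedAddCommGroup P'] [Lattice P'] [IsOrderedAddMonoid P'] [HasSolidNorm P']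
    [NormedSpace ℝ P'] [CompleteSpace P']
    {π : P →L[ℝ] P'} {ι : P' →L[ℝ] P} (hπ : IsLatticeOpPreserving π)
    (hι : IsLatticeOpPreserving ι) (hπ_norm : ‖π‖ ≤ 1) (hι_norm : ‖ι‖ ≤ 1)
    (hπι : ∀ p', π (ι p') = p') (hP : IsProjectiveBanachLattice P) :
    IsProjectiveBanachLattice P' := by
  intro X Y _ _ _ _ _ _ _ _ _ _ _ _ Q hQ_lat hQ T hT ε hε
  obtain ⟨S, hS, hQS, hS_norm⟩ := hP X Y Q hQ_lat hQ (T.comp π) (hT.comp hπ) ε hε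
  refine ⟨S.comp ι, hS.comp hι, fun p' => (hQS (ι p')).trans (congrArg T (hπι p')), ?_⟩
  calc ‖S.comp ι‖ ≤ ‖S‖ * ‖ι‖ := S.opNorm_comp_le ι
    _ ≤ ‖S‖ := mul_le_of_le_one_right (norm_nonneg S) hι_norm
    _ ≤ (1 + ε) * ‖T.comp π‖ := hS_norm
    _ ≤ (1 + ε) * (‖T‖ * ‖π‖) := by gcongr; exact T.opNorm_comp_le π
    _ ≤ (1 + ε) * ‖T‖ := by gcongr; exact mul_le_of_le_one_right (norm_nonneg T) hπ_norm

/-- If `π̃ : P → P'` and `ι̃ : P' → P` are norm-one Banach lattice homomorphisms with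
`π̃ ∘ ι̃ = id` and `P` is projective, then `P'` is projective. -/
theorem stmt_16 {P P' : Type}
    [NormedAddCommGroup P] [Lattice P] [IsOrderedAddMonoid P] [HasSolidNorm P] [NormedSpace ℝ P] [CompleteSpace P]
    [NormedAddCommGroup P'] [Lattice P'] [IsOrderedAddMonoid P'] [HasSolidNorm P'] [NormedSpace ℝ P'] [CompleteSpace P']
    (πt : P →L[ℝ] P') (ιt : P' →L[ℝ] P)
    (hπlat : IsLatticeOpPreserving πt) (hιlat : IsLatticeOpPreserving ιt)
    (hπnorm : ‖πt‖ = 1) (hιnorm : ‖ιt‖ = 1)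
    (hretr : ∀ p' : P', πt (ιt p') = p')
    (hP : IsProjectiveBanachLattice P) :
    IsProjectiveBanachLattice P' :=
  .of_retract hπlat hιlat hπnorm.le hιnorm.le hretr hP
end
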